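/- (Christoffel transformation for the P-family.) For every n ∈ ℕ and α ∈ ℕ: x·P_n^{(α+1)}(x) = P_{n+1}^{(α)}(x) + ω_{n+1}^{(α)}·P_n^{(α)}(x), where ω_{n+1}^{(α)} := H_n^{(α+1)}·(H_n^{(α)})^{−1}. -/

import Mathlib

/-!
The difference `D = x·P_n^{(α+1)} - P_{n+1}^{(α)} - ω·P_n^{(α)}` has degree at most `n`, since the
two monic leading terms cancel. Multiplying by `x` on the left shifts `α` to `α + 1` in the form,
so `⟨D, x^i⟩^α` is `⟨P_n^{(α+1)}, x^i⟩^{α+1} - ⟨P_{n+1}^{(α)}, x^i⟩^α - ω ⟨P_n^{(α)}, x^i⟩^α`, which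
vanishes for `i < n` by orthogonality and for `i = n` by the choice of `ω`. The coefficient
vector of `D` is then annihilated by the invertible moment matrix `M_{n+1}^{(α)}`, so `D = 0`.
-/

open MeasureTheory Polynomial Matrix Filter

/-- Evaluation of a matrix polynomial at a real scalar. -/
noncomputable def mpEval {p : ℕ} (f : Polynomial (Matrix (Fin p) (Fin p) ℝ)) (x : ℝ) :
    Matrix (Fin p) (Fin p) ℝ :=
  f.sum fun k a => x ^ k • a

/-- The adjacent matrix-valued θ-deformed bilinear form
`⟨f, g⟩_θ^α = ∫ f(x) · x^α · W(x) · g(x^θ)ᵀ dx`, computed entrywise. -/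
noncomputable def bform {p : ℕ} (θ : ℕ) (W : ℝ → Matrix (Fin p) (Fin p) ℝ) (α : ℕ)
    (f g : Polynomial (Matrix (Fin p) (Fin p) ℝ)) : Matrix (Fin p) (Fin p) ℝ :=
  Matrix.of fun i j => ∫ x : ℝ, (mpEval f x * (x ^ α • W x) * (mpEval g (x ^ θ))ᵀ) i j

/-- A matrix polynomial is monic of degree `n`: the `x^n` coefficient is `I_p`
and all higher coefficients vanish. -/
def MonicDeg {p : ℕ} (f : Polynomial (Matrix (Fin p) (Fin p) ℝ)) (n : ℕ) : Prop :=
  f.coeff n = 1 ∧ ∀ k : ℕ, n < k → f.coeff k = 0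

/-- The k-th moment `m_k = ∫ x^k W(x) dx`, computed entrywise. -/
noncomputable def mom {p : ℕ} (W : ℝ → Matrix (Fin p) (Fin p) ℝ) (k : ℕ) :
    Matrix (Fin p) (Fin p) ℝ :=
  Matrix.of fun i j => ∫ x : ℝ, x ^ k * W x i j

/-- The block moment matrix `M_n^{(α)} = (m_{α+i+jθ})_{i,j=0}^{n-1}`, as an
`n × n` matrix over the ring of `p × p` real matrices. -/
noncomputable def momMat {p : ℕ} (θ : ℕ) (W : ℝ → Matrix (Fin p) (Fin p) ℝ) (n α : ℕ) :
    Matrix (Fin n) (Fin n) (Matrix (Fin p) (Fin p) ℝ) :=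
  Matrix.of fun i j => mom W (α + (i : ℕ) + (j : ℕ) * θ)

section

variable {p : ℕ}

lemma MonicDeg.natDegree_le {f : Polynomial (Matrix (Fin p) (Fin p) ℝ)} {n : ℕ}
    (hf : MonicDeg f n) : f.natDegree ≤ n :=
  natDegree_le_iff_coeff_eq_zero.2 hf.2

lemma MonicDeg.natDegree_X_mul_sub_le {f g : Polynomial (Matrix (Fin p) (Fin p) ℝ)} {n : ℕ}
    (hf : MonicDeg f n) (hg : MonicDeg g (n + 1)) : (X * f - g).natDegree ≤ n := by
  refine natDegree_le_iff_coeff_eq_zero.2 fun k hk => ?_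
  obtain ⟨m, rfl⟩ : ∃ m, k = m + 1 := ⟨k - 1, by omega⟩
  rw [coeff_sub, coeff_X_mul]
  rcases (Nat.lt_succ_iff.mp hk).eq_or_lt with rfl | hm
  · rw [hf.1, hg.1, sub_self]
  · rw [hf.2 m hm, hg.2 (m + 1) (by omega), sub_self]

lemma mpEval_eq_sum_range (f : Polynomial (Matrix (Fin p) (Fin p) ℝ)) (x : ℝ) {N : ℕ}
    (hN : f.natDegree < N) : mpEval f x = ∑ k ∈ Finset.range N, x ^ k • f.coeff k :=
  f.sum_over_range' (fun _ => smul_zero _) N hN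

lemma mpEval_X_pow (i : ℕ) (x : ℝ) :
    mpEval (X ^ i : Polynomial (Matrix (Fin p) (Fin p) ℝ)) x = x ^ i • 1 := by
  rw [mpEval_eq_sum_range _ x (Nat.lt_succ_of_le (natDegree_X_pow_le i))]
  simp [coeff_X_pow]

variable {θ : ℕ} {W : ℝ → Matrix (Fin p) (Fin p) ℝ}

lemma bform_X_pow_eq_sum_range
    (hWint : ∀ (k : ℕ) (i j : Fin p), Integrable fun x : ℝ => x ^ k * W x i j)
    (α i : ℕ) (f : Polynomial (Matrix (Fin p) (Fin p) ℝ)) {N : ℕ} (hN : f.natDegree < N) :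
    bform θ W α f (X ^ i) = ∑ k ∈ Finset.range N, f.coeff k * mom W (α + k + i * θ) := by
  have integrand : ∀ (x : ℝ) (a b : Fin p),
      (mpEval f x * (x ^ α • W x) * (mpEval (X ^ i) (x ^ θ))ᵀ : Matrix (Fin p) (Fin p) ℝ) a b
        = ∑ k ∈ Finset.range N, ∑ c, f.coeff k a c * (x ^ (α + k + i * θ) * W x c b) := by
    intro x a b
    rw [mpEval_X_pow, transpose_smul, transpose_one, mpEval_eq_sum_range f x hN,
      Finset.sum_mul, Finset.sum_mul, Matrix.sum_apply]
    refine Finset.sum_congr rfl fun k _ => ?_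
    rw [smul_mul_assoc, smul_mul_assoc, mul_smul_comm, mul_smul_comm, mul_one, smul_smul,
      smul_smul, Matrix.smul_apply, smul_eq_mul, mul_apply, Finset.mul_sum]
    refine Finset.sum_congr rfl fun c _ => ?_
    rw [show α + k + i * θ = k + θ * i + α by ring, pow_add, pow_add, pow_mul]
    ring
  ext a b
  have integrable : ∀ k c, Integrable fun x : ℝ =>
      f.coeff k a c * (x ^ (α + k + i * θ) * W x c b) := fun k c =>
    (hWint _ c b).const_mul _
  simp only [bform, of_apply, integrand]
  rw [integral_finsetSum _ fun k _ => integrable_finsetSum _ fun c _ => integrable k c,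
    Matrix.sum_apply]
  refine Finset.sum_congr rfl fun k _ => ?_
  rw [integral_finsetSum _ fun c _ => integrable k c, mul_apply]
  simp only [integral_const_mul, mom, of_apply]

lemma bform_sub_left
    (hWint : ∀ (k : ℕ) (i j : Fin p), Integrable fun x : ℝ => x ^ k * W x i j)
    (α i : ℕ) (f g : Polynomial (Matrix (Fin p) (Fin p) ℝ)) :
    bform θ W α (f - g) (X ^ i) = bform θ W α f (X ^ i) - bform θ W α g (X ^ i) := by
  have hf : f.natDegree < f.natDegree + g.natDegree + 1 := by omega
  have hg : g.natDegree < f.natDegree + g.natDegree + 1 := by omega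
  have hfg := (natDegree_sub_le f g).trans_lt (max_lt hf hg)
  simp only [bform_X_pow_eq_sum_range hWint α i _ hf, bform_X_pow_eq_sum_range hWint α i _ hg,
    bform_X_pow_eq_sum_range hWint α i _ hfg, coeff_sub, sub_mul, Finset.sum_sub_distrib]

lemma bform_C_mul_left
    (hWint : ∀ (k : ℕ) (i j : Fin p), Integrable fun x : ℝ => x ^ k * W x i j)
    (α i : ℕ) (a : Matrix (Fin p) (Fin p) ℝ) (f : Polynomial (Matrix (Fin p) (Fin p) ℝ)) :
    bform θ W α (C a * f) (X ^ i) = a * bform θ W α f (X ^ i) := by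
  have hf := Nat.lt_succ_self f.natDegree
  have haf := (natDegree_C_mul_le a f).trans_lt hf
  simp only [bform_X_pow_eq_sum_range hWint α i _ hf,
    bform_X_pow_eq_sum_range hWint α i _ haf, coeff_C_mul, Finset.mul_sum, mul_assoc]

lemma bform_X_mul_left
    (hWint : ∀ (k : ℕ) (i j : Fin p), Integrable fun x : ℝ => x ^ k * W x i j)
    (α i : ℕ) (f : Polynomial (Matrix (Fin p) (Fin p) ℝ)) :
    bform θ W α (X * f) (X ^ i) = bform θ W (α + 1) f (X ^ i) := by
  have hXf : (X * f).natDegree < f.natDegree + 2 :=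
    (natDegree_mul_le.trans (Nat.add_le_add_right natDegree_X_le _)).trans_lt (by omega)
  rw [bform_X_pow_eq_sum_range hWint α i _ hXf,
    bform_X_pow_eq_sum_range hWint (α + 1) i f (Nat.lt_succ_self _), Finset.sum_range_succ']
  simp only [coeff_X_mul, mul_coeff_zero, coeff_X_zero, zero_mul, add_zero]
  exact Finset.sum_congr rfl fun k _ => by rw [show α + (k + 1) = α + 1 + k by omega]

lemma eq_zero_of_bform_X_pow_eq_zero
    (hWint : ∀ (k : ℕ) (i j : Fin p), Integrable fun x : ℝ => x ^ k * W x i j)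
    {n α : ℕ} (hM : IsUnit (momMat θ W (n + 1) α)) {f : Polynomial (Matrix (Fin p) (Fin p) ℝ)}
    (hdeg : f.natDegree ≤ n) (horth : ∀ i ≤ n, bform θ W α f (X ^ i) = 0) : f = 0 := by
  set v : Fin (n + 1) → Matrix (Fin p) (Fin p) ℝ := fun k => f.coeff k
  have hvM : v ᵥ* momMat θ W (n + 1) α = 0 := by
    funext j
    have := horth j (Nat.lt_succ_iff.mp j.isLt)
    rw [bform_X_pow_eq_sum_range hWint α j f (Nat.lt_succ_of_le hdeg), Finset.sum_range] at this
    simpa [vecMul, dotProduct, momMat, v] using this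
  have hv : v = 0 := by
    obtain ⟨u, hu⟩ := hM
    simpa [← hu, vecMul_vecMul] using congrArg (· ᵥ* u.inv) hvM
  ext k : 1
  rcases le_or_gt k n with hk | hk
  · simpa [v] using congrFun hv ⟨k, Nat.lt_succ_of_le hk⟩
  · simp [coeff_eq_zero_of_natDegree_lt (hdeg.trans_lt hk)]

end

theorem statement7_general
    (p θ : ℕ)
    (W : ℝ → Matrix (Fin p) (Fin p) ℝ)
    (hWint : ∀ (k : ℕ) (i j : Fin p), Integrable fun x : ℝ => x ^ k * W x i j)
    (hM : ∀ (n α : ℕ), 1 ≤ n → IsUnit (momMat θ W n α))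
    (P : ℕ → ℕ → Polynomial (Matrix (Fin p) (Fin p) ℝ))
    (hPmonic : ∀ n α : ℕ, MonicDeg (P n α) n)
    (hPorth : ∀ n α : ℕ, ∀ i < n, bform θ W α (P n α) (X ^ i) = 0)
    (H : ℕ → ℕ → Matrix (Fin p) (Fin p) ℝ)
    (hHdef : ∀ n α : ℕ, H n α = bform θ W α (P n α) (X ^ n))
    (hHunit : ∀ n α : ℕ, IsUnit (H n α)) :
    ∀ n α : ℕ,
      (X : Polynomial (Matrix (Fin p) (Fin p) ℝ)) * P n (α + 1)
        = P (n + 1) α + C (H n (α + 1) * Ring.inverse (H n α)) * P n α := by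
  intro n α
  set ω := H n (α + 1) * Ring.inverse (H n α)
  have hdeg : (X * P n (α + 1) - P (n + 1) α - C ω * P n α).natDegree ≤ n :=
    (natDegree_sub_le _ _).trans <| max_le
      ((hPmonic n (α + 1)).natDegree_X_mul_sub_le (hPmonic (n + 1) α))
      ((natDegree_C_mul_le _ _).trans (hPmonic n α).natDegree_le)
  have horth : ∀ i ≤ n, bform θ W α (X * P n (α + 1) - P (n + 1) α - C ω * P n α) (X ^ i) = 0 := by
    intro i hi
    rw [bform_sub_left hWint, bform_sub_left hWint, bform_C_mul_left hWint, bform_X_mul_left hWint,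
      hPorth (n + 1) α i (by omega), sub_zero]
    rcases hi.lt_or_eq with hi | rfl
    · rw [hPorth n (α + 1) i hi, hPorth n α i hi, mul_zero, sub_zero]
    · rw [← hHdef, ← hHdef, mul_assoc, Ring.inverse_mul_cancel _ (hHunit i α), mul_one, sub_self]
  rw [← sub_eq_zero, ← sub_sub]
  exact eq_zero_of_bform_X_pow_eq_zero hWint (hM (n + 1) α n.succ_pos) hdeg horth

/-- Christoffel transformation for the P-family:
`x·P_n^{(α+1)} = P_{n+1}^{(α)} + ω_{n+1}^{(α)}·P_n^{(α)}` with
`ω_{n+1}^{(α)} = H_n^{(α+1)}·(H_n^{(α)})⁻¹`. -/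
theorem statement7
    (p θ : ℕ) (hp : 1 ≤ p) (hθ : 1 ≤ θ)
    (W : ℝ → Matrix (Fin p) (Fin p) ℝ)
    (hWmeas : ∀ i j : Fin p, Measurable fun x : ℝ => W x i j)
    (hWint : ∀ (k : ℕ) (i j : Fin p), Integrable fun x : ℝ => x ^ k * W x i j)
    (hM : ∀ (n α : ℕ), 1 ≤ n → IsUnit (momMat θ W n α))
    (P Q : ℕ → ℕ → Polynomial (Matrix (Fin p) (Fin p) ℝ))
    (hPmonic : ∀ n α : ℕ, MonicDeg (P n α) n)
    (hPorth : ∀ n α : ℕ, ∀ i < n, bform θ W α (P n α) (X ^ i) = 0)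
    (hQmonic : ∀ n α : ℕ, MonicDeg (Q n α) n)
    (hQorth : ∀ n α : ℕ, ∀ i < n, bform θ W α (X ^ i) (Q n α) = 0)
    (H : ℕ → ℕ → Matrix (Fin p) (Fin p) ℝ)
    (hHdef : ∀ n α : ℕ, H n α = bform θ W α (P n α) (X ^ n))
    (hHunit : ∀ n α : ℕ, IsUnit (H n α)) :
    ∀ n α : ℕ,
      (X : Polynomial (Matrix (Fin p) (Fin p) ℝ)) * P n (α + 1)
        = P (n + 1) α + C (H n (α + 1) * Ring.inverse (H n α)) * P n α :=
  statement7_general p θ W hWint hM P hPmonic hPorth H hHdef hHunit
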